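/- Let d ≥ 1, K ≥ 0, and let φ : ℝ^d → ℝ be K-Lipschitz. Fix t > 0 and set ψ_t(y) = ‖y‖²/2 + t·φ(y), ψ_t*(x) = sup_y (⟨x,y⟩ − ψ_t(y)), ψ_t**(y) = sup_x (⟨x,y⟩ − ψ_t*(x)), and Θ_t = {y ∈ ℝ^d : ψ_t**(y) = ψ_t(y)}. Then for every x ∈ ℝ^d, every point y ∈ ∂ψ_t*(x) belongs to the convex hull of the set ∂ψ_t*(x) ∩ Θ_t. -/

import Mathlib

/-! The supremum defining `ψ*(x)` is attained because `ψ` grows superlinearly, and every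
maximizer `y` of `⟪x, ·⟫ - ψ` lies in `∂ψ*(x)` and satisfies `ψ** y = ψ y` (Fenchel–Young).
The maximizers form a compact set, so their convex hull is closed. If `y₀ ∈ ∂ψ*(x)` were
outside it, separate it by a direction `v`: the subgradient inequality forces every maximizer
for the slope `x + σ • v`, `σ > 0`, to satisfy `⟪v, ·⟫ ≥ ⟪v, y₀⟫`, and as `σ ↓ 0` these
maximizers accumulate at a maximizer for `x`, contradicting the separation. -/

open scoped RealInnerProductSpace
noncomputable section

/-- Legendre transform: `f*(x) = sup_y (⟨x,y⟩ − f(y))`. -/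
def conj {d : ℕ} (f : EuclideanSpace ℝ (Fin d) → ℝ)
    (x : EuclideanSpace ℝ (Fin d)) : ℝ :=
  ⨆ y : EuclideanSpace ℝ (Fin d), (⟪x, y⟫ - f y)

/-- `ψ_t(y) = ‖y‖²/2 + t φ(y)`. -/
def psiFun {d : ℕ} (φ : EuclideanSpace ℝ (Fin d) → ℝ) (t : ℝ)
    (y : EuclideanSpace ℝ (Fin d)) : ℝ :=
  ‖y‖ ^ 2 / 2 + t * φ y

/-- The subgradient of `g` at `x`. -/
def subgrad {d : ℕ} (g : EuclideanSpace ℝ (Fin d) → ℝ)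
    (x : EuclideanSpace ℝ (Fin d)) : Set (EuclideanSpace ℝ (Fin d)) :=
  {y | ∀ z, g z ≥ g x + ⟪y, z - x⟫}

open Set Function

theorem IsCompact.convexHull_of_finiteDimensional {E : Type*} [NormedAddCommGroup E]
    [NormedSpace ℝ E] [FiniteDimensional ℝ E] {s : Set E} (hs : IsCompact s) :
    IsCompact (convexHull ℝ s) := by
  rcases s.eq_empty_or_nonempty with rfl | ⟨s₀, hs₀⟩
  · simp
  set n := Module.finrank ℝ E + 1
  have hcont : Continuous fun p : (Fin n → ℝ) × (Fin n → E) => ∑ i, p.1 i • p.2 i := by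
    fun_prop
  convert ((isCompact_stdSimplex ℝ (Fin n)).prod (isCompact_univ_pi fun _ => hs)).image hcont
  refine Subset.antisymm (fun y hy => ?_) ?_
  · -- Carathéodory: `y` is a convex combination of at most `finrank ℝ E + 1` points of `s`
    obtain ⟨ι, _, z, w, hzs, hind, hw, hw1, rfl⟩ := eq_pos_convex_span_of_mem_convexHull hy
    obtain ⟨e⟩ : Nonempty (ι ↪ Fin n) := Embedding.nonempty_of_card_le <| by
      simpa [n] using hind.card_le_finrank_succ.trans
        (Nat.succ_le_succ (Submodule.finrank_le _))
    refine ⟨(extend e w 0, extend e z fun _ => s₀), ⟨⟨fun j => ?_, ?_⟩, fun j _ => ?_⟩, ?_⟩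
    · by_cases hj : j ∈ range e
      · obtain ⟨i, rfl⟩ := hj
        simpa [e.injective.extend_apply] using (hw i).le
      · simp [extend_apply' _ _ _ (by simpa using hj)]
    · rw [← hw1]
      exact (Fintype.sum_of_injective e e.injective _ _
        (fun j hj => by simp [extend_apply' _ _ _ (by simpa using hj)])
        fun i => by simp [e.injective.extend_apply]).symm
    · by_cases hj : j ∈ range e
      · obtain ⟨i, rfl⟩ := hj
        simpa [e.injective.extend_apply] using hzs (mem_range_self i)
      · simpa [extend_apply' _ _ _ (by simpa using hj)] using hs₀
    · exact (Fintype.sum_of_injective e e.injective (fun i => w i • z i) _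
        (fun j hj => by simp [extend_apply' _ _ _ (by simpa using hj)])
        fun i => by simp [e.injective.extend_apply]).symm
  · rintro _ ⟨⟨w, z⟩, ⟨hw, hz⟩, rfl⟩
    exact (convex_convexHull ℝ s).sum_mem (fun i _ => hw.1 i) hw.2
      fun i _ => subset_convexHull ℝ s (hz i trivial)

open Filter Topology Metric

section Conjugate

variable {d : ℕ} {f : EuclideanSpace ℝ (Fin d) → ℝ} {x y : EuclideanSpace ℝ (Fin d)}

def conjArgmax (f : EuclideanSpace ℝ (Fin d) → ℝ) (x : EuclideanSpace ℝ (Fin d)) :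
    Set (EuclideanSpace ℝ (Fin d)) :=
  {y | ∀ z, ⟪x, z⟫ - f z ≤ ⟪x, y⟫ - f y}

theorem conj_eq_of_mem_conjArgmax (hy : y ∈ conjArgmax f x) : conj f x = ⟪x, y⟫ - f y :=
  le_antisymm (ciSup_le hy) (le_ciSup ⟨_, forall_mem_range.2 hy⟩ y)

theorem inner_sub_le_conj (hx : (conjArgmax f x).Nonempty) (z : EuclideanSpace ℝ (Fin d)) :
    ⟪x, z⟫ - f z ≤ conj f x := by
  obtain ⟨y, hy⟩ := hx
  exact (conj_eq_of_mem_conjArgmax hy).symm ▸ hy z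

theorem conjArgmax_subset_subgrad (hattain : ∀ x, (conjArgmax f x).Nonempty) :
    conjArgmax f x ⊆ subgrad (conj f) x := by
  intro y hy z
  have := inner_sub_le_conj (hattain z) y
  rw [conj_eq_of_mem_conjArgmax hy, inner_sub_right, real_inner_comm z, real_inner_comm x]
  linarith

theorem conj_conj_eq_of_mem_conjArgmax (hattain : ∀ x, (conjArgmax f x).Nonempty)
    (hy : y ∈ conjArgmax f x) : conj (conj f) y = f y := by
  have hx : x ∈ conjArgmax (conj f) y := fun z => by
    have := inner_sub_le_conj (hattain z) y
    rw [conj_eq_of_mem_conjArgmax hy, real_inner_comm z, real_inner_comm x]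
    linarith
  rw [conj_eq_of_mem_conjArgmax hx, conj_eq_of_mem_conjArgmax hy, real_inner_comm]
  ring

theorem isClosed_conjArgmax (hf : Continuous f) (x : EuclideanSpace ℝ (Fin d)) :
    IsClosed (conjArgmax f x) := by
  simp only [conjArgmax, ofPred_forall]
  exact isClosed_iInter fun z => isClosed_le continuous_const (by fun_prop)

theorem mem_conjArgmax_of_tendsto {ι : Type*} {l : Filter ι} [l.NeBot] (hf : Continuous f)
    {xs ys : ι → EuclideanSpace ℝ (Fin d)} (hxs : Tendsto xs l (𝓝 x)) (hys : Tendsto ys l (𝓝 y))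
    (h : ∀ n, ys n ∈ conjArgmax f (xs n)) : y ∈ conjArgmax f x := fun z =>
  le_of_tendsto_of_tendsto' ((hxs.inner tendsto_const_nhds).sub_const _)
    ((hxs.inner hys).sub ((hf.tendsto y).comp hys)) fun n => h n z

theorem inner_le_inner_of_mem_subgrad_conj {y₀ v : EuclideanSpace ℝ (Fin d)} {σ : ℝ}
    (hx : (conjArgmax f x).Nonempty) (hy₀ : y₀ ∈ subgrad (conj f) x) (hσ : 0 < σ)
    (hy : y ∈ conjArgmax f (x + σ • v)) : ⟪v, y₀⟫ ≤ ⟪v, y⟫ := by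
  have h₁ := hy₀ (x + σ • v)
  rw [conj_eq_of_mem_conjArgmax hy, add_sub_cancel_left, inner_smul_right, inner_add_left,
    real_inner_smul_left, real_inner_comm v y₀] at h₁
  have h₂ := inner_sub_le_conj hx y
  exact le_of_mul_le_mul_left (by linarith) hσ

def IsSupercoercive (f : EuclideanSpace ℝ (Fin d) → ℝ) : Prop :=
  ∀ r, ∃ R, ∀ y, R ≤ ‖y‖ → r * ‖y‖ + f 0 < f y

section GrowthBound

variable {r R : ℝ}

theorem inner_sub_lt_of_le_norm (hR : ∀ y, R ≤ ‖y‖ → r * ‖y‖ + f 0 < f y) (hx : ‖x‖ ≤ r)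
    (hy : R ≤ ‖y‖) :
    ⟪x, y⟫ - f y < ⟪x, 0⟫ - f 0 := by
  have := hR y hy
  have := (real_inner_le_norm x y).trans (mul_le_mul_of_nonneg_right hx (norm_nonneg y))
  rw [inner_zero_right]
  linarith

theorem norm_lt_of_mem_conjArgmax (hR : ∀ y, R ≤ ‖y‖ → r * ‖y‖ + f 0 < f y)
    (hx : ‖x‖ ≤ r) (hy : y ∈ conjArgmax f x) : ‖y‖ < R := by
  by_contra! hRy
  exact (hy 0).not_gt (inner_sub_lt_of_le_norm hR hx hRy)

theorem conjArgmax_subset_closedBall (hR : ∀ y, R ≤ ‖y‖ → r * ‖y‖ + f 0 < f y)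
    (hx : ‖x‖ ≤ r) : conjArgmax f x ⊆ closedBall 0 R :=
  fun _ hy => mem_closedBall_zero_iff.2 (norm_lt_of_mem_conjArgmax hR hx hy).le

theorem conjArgmax_nonempty (hR : ∀ y, R ≤ ‖y‖ → r * ‖y‖ + f 0 < f y) (hf : Continuous f)
    (hx : ‖x‖ ≤ r) : (conjArgmax f x).Nonempty := by
  have h₀ : (0 : EuclideanSpace ℝ (Fin d)) ∈ closedBall 0 R := by
    by_contra h
    rw [mem_closedBall_zero_iff, not_le] at h
    exact (hR 0 h.le).ne (by simp)
  obtain ⟨y, -, hy⟩ := (isCompact_closedBall 0 R).exists_isMaxOn ⟨0, h₀⟩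
    (by fun_prop : Continuous fun y => ⟪x, y⟫ - f y).continuousOn
  refine ⟨y, fun z => ?_⟩
  by_cases hz : z ∈ closedBall 0 R
  · exact hy hz
  · rw [mem_closedBall_zero_iff, not_le] at hz
    exact (inner_sub_lt_of_le_norm hR hx hz.le).le.trans (hy h₀)

end GrowthBound

theorem IsSupercoercive.conjArgmax_nonempty (hf : Continuous f) (h : IsSupercoercive f)
    (x : EuclideanSpace ℝ (Fin d)) : (conjArgmax f x).Nonempty :=
  (h ‖x‖).elim fun _ hR => _root_.conjArgmax_nonempty hR hf le_rfl

theorem IsSupercoercive.isCompact_conjArgmax (hf : Continuous f) (h : IsSupercoercive f)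
    (x : EuclideanSpace ℝ (Fin d)) : IsCompact (conjArgmax f x) :=
  (h ‖x‖).elim fun _ hR => (isCompact_closedBall 0 _).of_isClosed_subset
    (isClosed_conjArgmax hf x) (conjArgmax_subset_closedBall hR le_rfl)

theorem IsSupercoercive.mem_convexHull_conjArgmax_of_mem_subgrad {y₀ : EuclideanSpace ℝ (Fin d)}
    (hf : Continuous f) (h : IsSupercoercive f) (hy₀ : y₀ ∈ subgrad (conj f) x) :
    y₀ ∈ convexHull ℝ (conjArgmax f x) := by
  by_contra hy₀'
  obtain ⟨L, u, hLu, huy₀⟩ := geometric_hahn_banach_closed_point (convex_convexHull ℝ _)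
    (h.isCompact_conjArgmax hf x).convexHull_of_finiteDimensional.isClosed hy₀'
  set v := (InnerProductSpace.toDual ℝ (EuclideanSpace ℝ (Fin d))).symm L
  have hv (z : EuclideanSpace ℝ (Fin d)) : ⟪v, z⟫ = L z := InnerProductSpace.toDual_symm_apply
  set σ : ℕ → ℝ := fun n => 1 / (n + 1)
  have hσ : Tendsto σ atTop (𝓝 0) := tendsto_one_div_add_atTop_nhds_zero_nat
  obtain ⟨R, hR⟩ := h (‖x‖ + ‖v‖)
  have hxσ (n : ℕ) : ‖x + σ n • v‖ ≤ ‖x‖ + ‖v‖ := by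
    refine (norm_add_le _ _).trans (add_le_add_right ?_ _)
    rw [norm_smul, Real.norm_of_nonneg (by positivity)]
    exact mul_le_of_le_one_left (norm_nonneg v) (div_le_one_of_le₀ (by simp) (by positivity))
  choose ys hys using fun n => _root_.conjArgmax_nonempty hR hf (hxσ n)
  obtain ⟨yb, -, ns, hns, hlim⟩ := (isCompact_closedBall 0 R).tendsto_subseq
    fun n => conjArgmax_subset_closedBall hR (hxσ n) (hys n)
  have hyb : yb ∈ conjArgmax f x := by
    refine mem_conjArgmax_of_tendsto hf ?_ hlim fun n => hys (ns n)
    simpa using tendsto_const_nhds.add ((hσ.comp hns.tendsto_atTop).smul_const v)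
  have hv_le : ⟪v, y₀⟫ ≤ ⟪v, yb⟫ := ge_of_tendsto' (tendsto_const_nhds.inner hlim) fun n =>
    inner_le_inner_of_mem_subgrad_conj ⟨yb, hyb⟩ hy₀ (by positivity) (hys (ns n))
  linarith [hLu yb (subset_convexHull ℝ _ hyb), hv yb, hv y₀]

theorem continuous_psiFun {φ : EuclideanSpace ℝ (Fin d) → ℝ} (hφ : Continuous φ) (t : ℝ) :
    Continuous (psiFun φ t) := by
  unfold psiFun
  fun_prop

theorem isSupercoercive_psiFun {φ : EuclideanSpace ℝ (Fin d) → ℝ} {L : NNReal}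
    (hφ : LipschitzWith L φ) (t : ℝ) : IsSupercoercive (psiFun φ t) := by
  intro r
  refine ⟨2 * (|r| + |t| * L) + 1, fun y hy => ?_⟩
  have hφy : |φ y - φ 0| ≤ L * ‖y‖ := by
    simpa [Real.dist_eq] using hφ.dist_le_mul y 0
  have htφ : -(|t| * (L * ‖y‖)) ≤ t * φ y - t * φ 0 := by
    rw [← mul_sub, neg_le]
    exact (neg_le_abs _).trans (abs_mul t _ ▸ mul_le_mul_of_nonneg_left hφy (abs_nonneg t))
  have hr : r * ‖y‖ ≤ |r| * ‖y‖ := mul_le_mul_of_nonneg_right (le_abs_self r) (norm_nonneg y)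
  simp only [psiFun, norm_zero]
  nlinarith [abs_nonneg r, abs_nonneg t, L.coe_nonneg, norm_nonneg y]

end Conjugate

theorem stmt13_general (d : ℕ) (K : ℝ)
    (φ : EuclideanSpace ℝ (Fin d) → ℝ)
    (hLip : ∀ y z, |φ y - φ z| ≤ K * ‖y - z‖)
    (t : ℝ) (x : EuclideanSpace ℝ (Fin d)) :
    ∀ y ∈ subgrad (conj (psiFun φ t)) x,
      y ∈ convexHull ℝ (subgrad (conj (psiFun φ t)) x ∩
        {y' | conj (conj (psiFun φ t)) y' = psiFun φ t y'}) := by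
  have hφ : LipschitzWith K.toNNReal φ := .of_dist_le_mul fun y z => by
    rw [Real.dist_eq, dist_eq_norm]
    exact (hLip y z).trans (mul_le_mul_of_nonneg_right (Real.le_coe_toNNReal K) (norm_nonneg _))
  have hcont := continuous_psiFun hφ.continuous t
  have hcoer := isSupercoercive_psiFun hφ t
  have hattain := hcoer.conjArgmax_nonempty hcont
  intro y hy
  refine convexHull_mono (fun y' hy' => ?_)
    (hcoer.mem_convexHull_conjArgmax_of_mem_subgrad hcont hy)
  exact ⟨conjArgmax_subset_subgrad hattain hy', conj_conj_eq_of_mem_conjArgmax hattain hy'⟩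

theorem stmt13 (d : ℕ) (hd : 1 ≤ d) (K : ℝ) (hK : 0 ≤ K)
    (φ : EuclideanSpace ℝ (Fin d) → ℝ)
    (hLip : ∀ y z, |φ y - φ z| ≤ K * ‖y - z‖)
    (t : ℝ) (ht : 0 < t) (x : EuclideanSpace ℝ (Fin d)) :
    ∀ y ∈ subgrad (conj (psiFun φ t)) x,
      y ∈ convexHull ℝ (subgrad (conj (psiFun φ t)) x ∩
        {y' | conj (conj (psiFun φ t)) y' = psiFun φ t y'}) :=
  stmt13_general d K φ hLip t x
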